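/- arXiv:2312.16665 — 3 statements merged into one kernel-verified Lean document; each statement's English description precedes it below -/
import Mathlib

section
/- With the setup of the parsing lemma (X₁ ∼ X₂, X_i = s_i f(x_i) p_i, p_i a prefix of f(a_i) with |p_i| ≤ 12, s_i a suffix of f(b_i) with |s_i| ≤ 12), if for some letter k we have |x₁|_k ≥ |x₂|_k + 1, then a₂ = k or b₂ = k. -/
/-- The image of 0 under the morphism: 0740103050260. -/
def f0 : List (Fin 8) := [0,7,4,0,1,0,3,0,5,0,2,6,0]

/-- The cyclic shift morphism σ, sending each letter a to a+1 (mod 8). -/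
def sigmaW (w : List (Fin 8)) : List (Fin 8) := w.map (· + 1)

/-- The image of a letter under the cyclic morphism f: f(a) = σ^a(f(0)). -/
def fL (a : Fin 8) : List (Fin 8) := f0.map (· + a)

/-- The morphism f extended to words. -/
def fW (w : List (Fin 8)) : List (Fin 8) := w.flatMap fL

/-- f^n(0). -/
def fIter (n : ℕ) : List (Fin 8) := fW^[n] [0]

/-- u is a factor of the fixed point f^ω(0): since f^n(0) is a prefix of
f^{n+1}(0), this holds iff u is a factor of some f^n(0). -/
def FactorFP (u : List (Fin 8)) : Prop := ∃ n, u <:+: fIter n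

/-- A letter of Σ ∪ {ε} viewed as a word. -/
def optL (a : Option (Fin 8)) : List (Fin 8) := a.elim [] (fun x => [x])

/-- The image under f of an element of Σ ∪ {ε}. -/
def imgF (a : Option (Fin 8)) : List (Fin 8) := a.elim [] fL


lemma countfL (a k : Fin 8) : (fL a).count k = if a = k then 6 else 1 := by
  revert a k; decide

lemma lenfL (a : Fin 8) : (fL a).length = 13 := by
  revert a; decide

lemma countfW (k : Fin 8) (w : List (Fin 8)) :
    (fW w).count k = w.length + 5 * w.count k := by
  induction w with
  | nil => rfl
  | cons a t ih =>
    simp only [fW, List.flatMap_cons, List.count_append, List.length_cons,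
      List.count_cons] at *
    rw [ih, countfL]
    by_cases h : a = k
    · simp [h]; ring
    · have h2 : ¬ (a == k) := by simpa using h
      simp [h, h2]; ring

lemma lenfW (w : List (Fin 8)) : (fW w).length = 13 * w.length := by
  induction w with
  | nil => rfl
  | cons a t ih =>
    simp only [fW, List.flatMap_cons, List.length_append, List.length_cons] at *
    rw [ih, lenfL]; ring

lemma count_imgF_le (a : Option (Fin 8)) (k : Fin 8) (ha : a ≠ some k)
    (u : List (Fin 8)) (hu : u.Sublist (imgF a)) : u.count k ≤ 1 := by
  have := hu.count_le k
  match a with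
  | none => simp [imgF] at this; omega
  | some b =>
    have hbk : b ≠ k := fun h => ha (by rw [h])
    rw [show imgF (some b) = fL b from rfl, countfL, if_neg hbk] at this
    exact this

theorem stmt4
(X₁ X₂ x₁ x₂ p₁ p₂ s₁ s₂ : List (Fin 8))
    (a₁ a₂ b₁ b₂ : Option (Fin 8))
    (hperm : X₁.Perm X₂)
    (hX1 : X₁ = s₁ ++ fW x₁ ++ p₁) (hX2 : X₂ = s₂ ++ fW x₂ ++ p₂)
    (hp1 : p₁ <+: imgF a₁) (hp1len : p₁.length ≤ 12)
    (hp2 : p₂ <+: imgF a₂) (hp2len : p₂.length ≤ 12)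
    (hs1 : s₁ <:+ imgF b₁) (hs1len : s₁.length ≤ 12)
    (hs2 : s₂ <:+ imgF b₂) (hs2len : s₂.length ≤ 12)
    (k : Fin 8) (hk : x₁.count k ≥ x₂.count k + 1) :
    a₂ = some k ∨ b₂ = some k := by
  by_contra hcon
  push_neg at hcon
  have hc2 : p₂.count k ≤ 1 := count_imgF_le a₂ k hcon.1 p₂ hp2.sublist
  have hc2' : s₂.count k ≤ 1 := count_imgF_le b₂ k hcon.2 s₂ hs2.sublist
  have hcount := hperm.count_eq k
  have hlen := hperm.length_eq
  rw [hX1, hX2] at hcount hlen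
  simp only [List.count_append, List.length_append, countfW, lenfW] at hcount hlen
  omega
end

section
/- With the setup of the parsing lemma, one can choose words x̂₁ ∈ {x₁, x₁b₁, a₁x₁, a₁x₁b₁} and x̂₂ ∈ {x₂, x₂b₂, a₂x₂, a₂x₂b₂} such that x̂₁ ∼ x̂₂. -/
/-!
Counting letters, `|f(x)|_c = |x| + 5|x|_c`, while a prefix or suffix of length at most 12 of
`f(a)` contains at most one `c`, or five if `c = a`. Comparing lengths in `X₁ ∼ X₂` gives
`||x₁| - |x₂|| ≤ 1`; comparing the counts of `c` then gives `5 (|x₂|_c - |x₁|_c) ≤ 3 + 4k`,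
where `k` is the number of occurrences of `c` in `a₁b₁`, hence `|x₂|_c - |x₁|_c ≤ k`. So the multiset
difference `x₂ - x₁` is realized by a subword of `a₁b₁` and symmetrically `x₁ - x₂` by a subword of
`a₂b₂`; adding them to `x₁` and `x₂` yields the union of `x₁` and `x₂` in both cases.
-/

theorem exists_sublist_sublist_of_le_coe_append {α : Type*} {m : Multiset α} {l₁ l₂ : List α}
    (h : m ≤ ↑(l₁ ++ l₂)) :
    ∃ r₁ r₂ : List α, List.Sublist r₁ l₁ ∧ List.Sublist r₂ l₂ ∧ m = ↑(r₁ ++ r₂) := by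
  induction m using Quotient.inductionOn with
  | h l =>
    obtain ⟨l', hperm, hsub⟩ := Multiset.coe_le.mp h
    obtain ⟨r₁, r₂, rfl, h₁, h₂⟩ := List.sublist_append_iff.mp hsub
    exact ⟨r₁, r₂, h₁, h₂, Multiset.coe_eq_coe.mpr hperm.symm⟩

theorem perm_append_append_of_sub_eq_coe {α : Type*} [DecidableEq α]
    {x₁ x₂ r₁ r₂ t₁ t₂ : List α} (hr : (x₂ - x₁ : Multiset α) = ↑(r₁ ++ r₂))
    (ht : (x₁ - x₂ : Multiset α) = ↑(t₁ ++ t₂)) :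
    (r₁ ++ x₁ ++ r₂).Perm (t₁ ++ x₂ ++ t₂) := by
  have split : ∀ l₁ l l₂ : List α, (↑(l₁ ++ l ++ l₂) : Multiset α) = ↑(l₁ ++ l₂) + ↑l := by
    intro l₁ l l₂
    simp only [← Multiset.coe_add]
    abel
  rw [← Multiset.coe_eq_coe, split, split, ← hr, ← ht, ← Multiset.union_def, ← Multiset.union_def,
    Multiset.union_comm]

theorem eq_nil_or_eq_optL_of_sublist {r : List (Fin 8)} {a : Option (Fin 8)}
    (h : List.Sublist r (optL a)) : r = [] ∨ r = optL a := by
  cases a with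
  | none => exact .inl (List.sublist_nil.mp h)
  | some a => exact List.sublist_singleton.mp h

theorem append_append_cases_of_sublist_optL {x r₁ r₂ : List (Fin 8)} {a b : Option (Fin 8)}
    (h₁ : List.Sublist r₁ (optL a)) (h₂ : List.Sublist r₂ (optL b)) :
    r₁ ++ x ++ r₂ = x ∨ r₁ ++ x ++ r₂ = x ++ optL b ∨ r₁ ++ x ++ r₂ = optL a ++ x ∨
      r₁ ++ x ++ r₂ = optL a ++ x ++ optL b := by
  rcases eq_nil_or_eq_optL_of_sublist h₁ with rfl | rfl <;>
    rcases eq_nil_or_eq_optL_of_sublist h₂ with rfl | rfl <;> simp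

-- `f(a)` contains every letter once except `a`, which occurs six times, among them as its first and
-- its last letter; so dropping either end of `f(a)` leaves five `a`s.
theorem count_fL (a c : Fin 8) : (fL a).count c = 1 + 5 * [a].count c := by
  revert a c; decide

theorem count_take_fL (a c : Fin 8) : ((fL a).take 12).count c = 1 + 4 * [a].count c := by
  revert a c; decide

theorem count_take_reverse_fL (a c : Fin 8) :
    ((fL a).reverse.take 12).count c = 1 + 4 * [a].count c := by
  revert a c; decide

theorem length_fW (x : List (Fin 8)) : (fW x).length = 13 * x.length := by
  induction x with
  | nil => rfl
  | cons a x ih =>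
    simp only [fW, List.flatMap_cons, List.length_append, List.length_cons] at ih ⊢
    rw [ih]; simp [fL, f0]; ring

theorem count_fW (x : List (Fin 8)) (c : Fin 8) :
    (fW x).count c = x.length + 5 * x.count c := by
  induction x with
  | nil => rfl
  | cons a x ih =>
    simp only [fW, List.flatMap_cons, List.count_append, List.length_cons] at ih ⊢
    rw [ih, count_fL, List.count_cons, List.count_cons, List.count_nil]
    split_ifs <;> omega

theorem count_le_of_prefix_imgF {p : List (Fin 8)} {a : Option (Fin 8)} (hp : p <+: imgF a)
    (hlen : p.length ≤ 12) (c : Fin 8) : p.count c ≤ 1 + 4 * (optL a).count c := by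
  cases a with
  | none => simp [List.prefix_nil.mp hp]
  | some a =>
    calc p.count c ≤ ((fL a).take 12).count c :=
          (List.prefix_take_iff.mpr ⟨hp, hlen⟩).sublist.count_le c
      _ = 1 + 4 * (optL (some a)).count c := count_take_fL a c

theorem count_le_of_suffix_imgF {s : List (Fin 8)} {b : Option (Fin 8)} (hs : s <:+ imgF b)
    (hlen : s.length ≤ 12) (c : Fin 8) : s.count c ≤ 1 + 4 * (optL b).count c := by
  cases b with
  | none => simp [List.suffix_nil.mp hs]
  | some b =>
    have hrev : s.reverse <+: ((fL b).reverse).take 12 :=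
      List.prefix_take_iff.mpr ⟨List.reverse_prefix.mpr hs, by simpa using hlen⟩
    calc s.count c = s.reverse.count c := (List.count_reverse ..).symm
      _ ≤ ((fL b).reverse.take 12).count c := hrev.sublist.count_le c
      _ = 1 + 4 * (optL (some b)).count c := count_take_reverse_fL b c

def IsInterpretation (X x : List (Fin 8)) (a b : Option (Fin 8)) : Prop :=
  ∃ s p, X = s ++ fW x ++ p ∧ p <+: imgF a ∧ p.length ≤ 12 ∧ s <:+ imgF b ∧ s.length ≤ 12

namespace IsInterpretation

variable {X x : List (Fin 8)} {a b : Option (Fin 8)}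

theorem length_le (h : IsInterpretation X x a b) :
    13 * x.length ≤ X.length ∧ X.length ≤ 13 * x.length + 24 := by
  obtain ⟨s, p, rfl, -, hp, -, hs⟩ := h
  simp only [List.length_append, length_fW]
  omega

theorem count_le (h : IsInterpretation X x a b) (c : Fin 8) :
    x.length + 5 * x.count c ≤ X.count c ∧
      X.count c ≤ x.length + 5 * x.count c + 2 + 4 * (optL a ++ optL b).count c := by
  obtain ⟨s, p, rfl, hpa, hp, hsb, hs⟩ := h
  have hpc := count_le_of_prefix_imgF hpa hp c
  have hsc := count_le_of_suffix_imgF hsb hs c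
  simp only [List.count_append, count_fW] at hpc hsc ⊢
  omega

theorem sub_le {X' x' : List (Fin 8)} {a' b' : Option (Fin 8)} (h : IsInterpretation X x a b)
    (h' : IsInterpretation X' x' a' b') (hperm : X.Perm X') :
    (x' : Multiset (Fin 8)) - x ≤ ↑(optL a ++ optL b) := by
  rw [Multiset.le_iff_count]
  intro c
  have hlen := h.length_le
  have hlen' := h'.length_le
  have hc := h.count_le c
  have hc' := h'.count_le c
  rw [hperm.length_eq] at hlen
  rw [hperm.count_eq] at hc
  simp only [Multiset.count_sub, Multiset.coe_count]
  omega

end IsInterpretation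

theorem stmt7
(X₁ X₂ x₁ x₂ p₁ p₂ s₁ s₂ : List (Fin 8))
    (a₁ a₂ b₁ b₂ : Option (Fin 8))
    (hperm : X₁.Perm X₂)
    (hX1 : X₁ = s₁ ++ fW x₁ ++ p₁) (hX2 : X₂ = s₂ ++ fW x₂ ++ p₂)
    (hp1 : p₁ <+: imgF a₁) (hp1len : p₁.length ≤ 12)
    (hp2 : p₂ <+: imgF a₂) (hp2len : p₂.length ≤ 12)
    (hs1 : s₁ <:+ imgF b₁) (hs1len : s₁.length ≤ 12)
    (hs2 : s₂ <:+ imgF b₂) (hs2len : s₂.length ≤ 12) :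
    ∃ u v : List (Fin 8),
      (u = x₁ ∨ u = x₁ ++ optL b₁ ∨ u = optL a₁ ++ x₁ ∨ u = optL a₁ ++ x₁ ++ optL b₁) ∧
      (v = x₂ ∨ v = x₂ ++ optL b₂ ∨ v = optL a₂ ++ x₂ ∨ v = optL a₂ ++ x₂ ++ optL b₂) ∧
      u.Perm v := by
  have h₁ : IsInterpretation X₁ x₁ a₁ b₁ := ⟨s₁, p₁, hX1, hp1, hp1len, hs1, hs1len⟩
  have h₂ : IsInterpretation X₂ x₂ a₂ b₂ := ⟨s₂, p₂, hX2, hp2, hp2len, hs2, hs2len⟩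
  obtain ⟨r₁, r₂, hr₁, hr₂, hr⟩ := exists_sublist_sublist_of_le_coe_append (h₁.sub_le h₂ hperm)
  obtain ⟨t₁, t₂, ht₁, ht₂, ht⟩ :=
    exists_sublist_sublist_of_le_coe_append (h₂.sub_le h₁ hperm.symm)
  exact ⟨r₁ ++ x₁ ++ r₂, t₁ ++ x₂ ++ t₂, append_append_cases_of_sublist_optL hr₁ hr₂,
    append_append_cases_of_sublist_optL ht₁ ht₂, perm_append_append_of_sub_eq_coe hr ht⟩
end

section
/- Every length-2 factor of f^ω(0) is equivalent under the cyclic shift σ to a factor of the word 07401030502 (the length-11 prefix of f^ω(0)). -/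
/-! Every length-2 factor `ab` of f^ω(0) satisfies `b - a ∈ {1,2,3,4,5,7}`. This holds inside f(0),
survives the shifts σⁱ since only the difference matters, and passes from `w` to f(w) because each
block f(c) begins and ends with `c`: a factor straddling two blocks f(c) f(d) is `cd`, already a
factor of `w`. Each of these differences occurs in the prefix 07401030502, and a pair is determined
up to σ by its difference. -/

namespace List

variable {α : Type*} {R : α → α → Prop}

theorem IsChain.flatMap_of_head?_of_getLast? {g : α → List α}
    (hhead : ∀ c, (g c).head? = some c) (hlast : ∀ c, (g c).getLast? = some c)
    (hg : ∀ c, IsChain R (g c)) {l : List α} (hl : IsChain R l) :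
    IsChain R (l.flatMap g) := by
  have hne : [] ∉ l.map g := by
    simp only [mem_map, not_exists, not_and]
    intro c _ hc
    simpa [hc] using hhead c
  rw [flatMap_def, isChain_flatten hne]
  refine ⟨by simpa using fun c _ => hg c, isChain_map_of_isChain g ?_ hl⟩
  intro a b hab
  simpa [hhead, hlast] using hab

end List

abbrev GapStep (a b : Fin 8) : Prop := b - a ∈ ({1, 2, 3, 4, 5, 7} : Finset (Fin 8))

theorem isChain_fL (c : Fin 8) : (fL c).IsChain GapStep := by
  have hf0 : f0.IsChain GapStep := by decide
  rw [fL, List.isChain_map]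
  simpa only [GapStep, add_sub_add_right_eq_sub] using hf0

theorem isChain_fIter (n : ℕ) : (fIter n).IsChain GapStep := by
  induction n with
  | zero => exact List.isChain_singleton 0
  | succ n ih =>
    rw [fIter, Function.iterate_succ_apply']
    exact ih.flatMap_of_head?_of_getLast? (by decide) (by decide) isChain_fL

theorem GapStep.of_factorFP {a b : Fin 8} (h : FactorFP [a, b]) : GapStep a b := by
  obtain ⟨n, hn⟩ := h
  exact List.isChain_pair.mp ((isChain_fIter n).infix hn)

theorem GapStep.exists_infix_prefix :
    ∀ a b : Fin 8, GapStep a b →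
      ∃ c : Fin 8, [c, c + (b - a)] <:+: ([0,7,4,0,1,0,3,0,5,0,2] : List (Fin 8)) := by
  decide

open Fin.NatCast

theorem sigmaW_iterate (i : ℕ) (w : List (Fin 8)) : sigmaW^[i] w = w.map (· + (i : Fin 8)) := by
  induction i with
  | zero => simp
  | succ i ih =>
    rw [Function.iterate_succ_apply', ih, sigmaW, List.map_map]
    congr 1
    funext x
    simp only [Function.comp_apply, Nat.cast_succ]
    abel

theorem stmt12 (u : List (Fin 8)) (hfac : FactorFP u) (hlen : u.length = 2) :
    ∃ v : List (Fin 8), v <:+: [0,7,4,0,1,0,3,0,5,0,2] ∧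
      ∃ i : ℕ, u = sigmaW^[i] v := by
  obtain ⟨a, b, rfl⟩ := List.length_eq_two.mp hlen
  obtain ⟨c, hc⟩ := GapStep.exists_infix_prefix a b (.of_factorFP hfac)
  refine ⟨[c, c + (b - a)], hc, (a - c).val, ?_⟩
  simp only [sigmaW_iterate, List.map_cons, List.map_nil, Fin.cast_val_eq_self, List.cons.injEq,
    and_true]
  constructor <;> abel
end
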